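/- arXiv:2311.05009 — 4 statements merged into one kernel-verified Lean document; each statement's English description precedes it below -/
import Mathlib

section
/- Let Γ ⊂ ℝ^M be a compact set equal to the closure of its interior, and let F : ℝ^M → ℝ^M be continuous. For a continuously differentiable function A : ℝ^M → ℝ define the loss L_A(z) = ‖∇A(z) + F(z)‖² and J(A) = sup over all probability densities q on Γ of ∫_Γ L_A(z) q(z) dz. Assume there exists a continuously differentiable A* : ℝ^M → ℝ with ∇A*(z) = −F(z) for all z ∈ Γ. Then a continuously differentiable function Â minimizes J over all continuously differentiable functions (i.e., J(Â) = inf_A J(A)) if and only if ∇Â(z) = −F(z) for all z ∈ Γ. -/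
/-!
`J(A)` is the supremum of the averages of the nonnegative continuous loss `L_A` against
probability densities on `Γ`, so `J ≥ 0`, and `J(A*) = 0`; hence the infimum is `0`. If `L_A`
vanishes on `Γ` then `J(A) = 0`. Conversely, if `L_A(z₀) > 0` at some `z₀ ∈ Γ`, then since
`Γ = closure (interior Γ)` the open set `{L_A > 0} ∩ interior Γ` is nonempty, hence of positive
measure, and the uniform density on it has a positive average, so `J(A) > 0`.
-/

open MeasureTheory

section densityAverages

variable {X : Type*} [MeasurableSpace X]

def densityAverages (μ : Measure X) (Γ : Set X) (g : X → ℝ) : Set ℝ :=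
  {r : ℝ | ∃ q : X → ℝ, Measurable q ∧ (∀ z, 0 ≤ q z) ∧ (∫ z in Γ, q z ∂μ) = 1 ∧
    r = ∫ z in Γ, g z * q z ∂μ}

variable {μ : Measure X} {Γ : Set X} {g : X → ℝ} {r : ℝ}

lemma nonneg_of_mem_densityAverages (hg : ∀ z, 0 ≤ g z) (hr : r ∈ densityAverages μ Γ g) :
    0 ≤ r := by
  obtain ⟨q, -, hq0, -, rfl⟩ := hr
  exact integral_nonneg fun z => mul_nonneg (hg z) (hq0 z)

lemma le_of_mem_densityAverages (hΓ : MeasurableSet Γ) (hg : ∀ z, 0 ≤ g z) {C : ℝ}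
    (hgC : ∀ z ∈ Γ, g z ≤ C) (hr : r ∈ densityAverages μ Γ g) : r ≤ C := by
  obtain ⟨q, -, hq0, hq1, rfl⟩ := hr
  have hq : IntegrableOn q Γ μ := .of_integral_ne_zero (by simp [hq1])
  calc ∫ z in Γ, g z * q z ∂μ
      ≤ ∫ z in Γ, C * q z ∂μ := by
        refine integral_mono_of_nonneg (.of_forall fun z => mul_nonneg (hg z) (hq0 z))
          (hq.const_mul C) ?_
        filter_upwards [ae_restrict_mem hΓ] with z hz
        exact mul_le_mul_of_nonneg_right (hgC z hz) (hq0 z)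
    _ = C := by rw [integral_const_mul, hq1, mul_one]

lemma setAverage_mem_densityAverages {V : Set X} (hV : MeasurableSet V) (hVΓ : V ⊆ Γ)
    (hμV : μ V ≠ 0) (hμV' : μ V ≠ ⊤) : ⨍ z in V, g z ∂μ ∈ densityAverages μ Γ g := by
  have hμV_real : μ.real V ≠ 0 := (ENNReal.toReal_pos hμV hμV').ne'
  refine ⟨V.indicator fun _ => (μ.real V)⁻¹, measurable_const.indicator hV,
    Set.indicator_nonneg fun _ _ => by positivity, ?_, ?_⟩
  · rw [setIntegral_indicator hV, Set.inter_eq_self_of_subset_right hVΓ, setIntegral_const,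
      smul_eq_mul, mul_inv_cancel₀ hμV_real]
  · have hgq : (fun z => g z * V.indicator (fun _ => (μ.real V)⁻¹) z) =
        V.indicator fun z => (μ.real V)⁻¹ * g z := by
      ext z
      by_cases hz : z ∈ V <;> simp [hz, mul_comm]
    rw [hgq, setIntegral_indicator hV, Set.inter_eq_self_of_subset_right hVΓ,
      integral_const_mul, setAverage_eq, smul_eq_mul]

variable [TopologicalSpace X] [OpensMeasurableSpace X] [T2Space X]
  [μ.IsOpenPosMeasure] [IsFiniteMeasureOnCompacts μ]

lemma exists_pos_mem_densityAverages (hΓc : IsCompact Γ) (hΓ : Γ ⊆ closure (interior Γ))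
    (hg : Continuous g) {z₀ : X} (hz₀ : z₀ ∈ Γ) (hgz₀ : 0 < g z₀) :
    ∃ r ∈ densityAverages μ Γ g, 0 < r := by
  set V := {z | 0 < g z} ∩ interior Γ
  have hVopen : IsOpen V := (isOpen_lt continuous_const hg).inter isOpen_interior
  have hVΓ : V ⊆ Γ := fun z hz => interior_subset hz.2
  have hVne : V.Nonempty :=
    mem_closure_iff.1 (hΓ hz₀) _ (isOpen_lt continuous_const hg) hgz₀
  have hμV' : μ V ≠ ⊤ := (measure_mono hVΓ).trans_lt hΓc.measure_lt_top |>.ne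
  obtain ⟨x, hxV, hx⟩ := exists_le_setAverage (hVopen.measure_ne_zero μ hVne) hμV'
    ((hg.continuousOn.integrableOn_compact hΓc).mono_set hVΓ)
  exact ⟨_, setAverage_mem_densityAverages hVopen.measurableSet hVΓ
    (hVopen.measure_ne_zero μ hVne) hμV', hxV.1.trans_le hx⟩

theorem sSup_densityAverages_eq_zero_iff (hΓc : IsCompact Γ) (hΓ : Γ ⊆ closure (interior Γ))
    (hg : Continuous g) (hg0 : ∀ z, 0 ≤ g z) :
    sSup (densityAverages μ Γ g) = 0 ↔ ∀ z ∈ Γ, g z = 0 := by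
  have hΓm : MeasurableSet Γ := hΓc.isClosed.measurableSet
  constructor
  · intro hsup z hz
    by_contra hgz
    obtain ⟨C, hC⟩ := hΓc.bddAbove_image hg.continuousOn
    have hbdd : BddAbove (densityAverages μ Γ g) :=
      ⟨C, fun r hr => le_of_mem_densityAverages hΓm hg0
        (fun z hz => hC (Set.mem_image_of_mem g hz)) hr⟩
    obtain ⟨r, hr, hpos⟩ :=
      exists_pos_mem_densityAverages (μ := μ) hΓc hΓ hg hz ((hg0 z).lt_of_ne' hgz)
    linarith [le_csSup hbdd hr]
  · intro hzero
    refine le_antisymm (Real.sSup_nonpos fun r hr => ?_)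
      (Real.sSup_nonneg fun r hr => nonneg_of_mem_densityAverages hg0 hr)
    exact le_of_mem_densityAverages hΓm hg0 (fun z hz => (hzero z hz).le) hr

end densityAverages

lemma ContDiff.continuous_gradient {E : Type*} [NormedAddCommGroup E] [InnerProductSpace ℝ E]
    [CompleteSpace E] {A : E → ℝ} (hA : ContDiff ℝ 1 A) : Continuous (gradient A) :=
  (InnerProductSpace.toDual ℝ E).symm.continuous.comp (hA.continuous_fderiv one_ne_zero)

/-- minimizers of the sup-over-densities loss functional are exactly the
`C¹` functions whose gradient equals `-F` on `Γ`. -/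
theorem stmt_0 {M : ℕ}
    (Γ : Set (EuclideanSpace ℝ (Fin M)))
    (hΓc : IsCompact Γ) (hΓ : Γ = closure (interior Γ))
    (F : EuclideanSpace ℝ (Fin M) → EuclideanSpace ℝ (Fin M))
    (hF : Continuous F)
    (J : (EuclideanSpace ℝ (Fin M) → ℝ) → ℝ)
    (hJ : ∀ A : EuclideanSpace ℝ (Fin M) → ℝ,
      J A = sSup {r : ℝ | ∃ q : EuclideanSpace ℝ (Fin M) → ℝ,
        Measurable q ∧ (∀ z, 0 ≤ q z) ∧ (∫ z in Γ, q z) = 1 ∧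
        r = ∫ z in Γ, ‖gradient A z + F z‖ ^ 2 * q z})
    (hAstar : ∃ Astar : EuclideanSpace ℝ (Fin M) → ℝ,
      ContDiff ℝ 1 Astar ∧ ∀ z ∈ Γ, gradient Astar z = -F z)
    (Ahat : EuclideanSpace ℝ (Fin M) → ℝ) (hAhat : ContDiff ℝ 1 Ahat) :
    J Ahat = sInf {r : ℝ | ∃ A : EuclideanSpace ℝ (Fin M) → ℝ, ContDiff ℝ 1 A ∧ r = J A}
      ↔ ∀ z ∈ Γ, gradient Ahat z = -F z := by
  obtain ⟨Astar, hAstar, hAstarF⟩ := hAstar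
  have hJ' : ∀ A, J A = sSup (densityAverages volume Γ fun z => ‖gradient A z + F z‖ ^ 2) := hJ
  have hJ_eq_zero : ∀ A, ContDiff ℝ 1 A → (J A = 0 ↔ ∀ z ∈ Γ, gradient A z = -F z) := by
    intro A hA
    have hloss : Continuous fun z => ‖gradient A z + F z‖ ^ 2 :=
      (hA.continuous_gradient.add hF).norm.pow 2
    rw [hJ', sSup_densityAverages_eq_zero_iff hΓc hΓ.subset hloss fun z => by positivity]
    simp only [sq_eq_zero_iff, norm_eq_zero, add_eq_zero_iff_eq_neg]
  have hinf : sInf {r : ℝ | ∃ A, ContDiff ℝ 1 A ∧ r = J A} = 0 := by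
    refine IsLeast.csInf_eq ⟨⟨Astar, hAstar, ((hJ_eq_zero Astar hAstar).2 hAstarF).symm⟩, ?_⟩
    rintro _ ⟨A, -, rfl⟩
    exact hJ' A ▸ Real.sSup_nonneg fun r hr =>
      nonneg_of_mem_densityAverages (fun z => by positivity) hr
  rw [hinf, hJ_eq_zero Ahat hAhat]
end

section
/- Let ρ be a compactly supported Borel probability measure on ℝ^M and let f : ℝ^M → ℝ be continuous. Suppose z* ∈ supp(ρ) is the unique minimizer of f on supp(ρ), i.e., f(z*) < f(z) for every z ∈ supp(ρ) with z ≠ z*. Then the reweighted mean converges to the minimizer: lim_{κ → ∞} ( ∫_{ℝ^M} z·exp(−κ f(z)) ρ(dz) ) / ( ∫_{ℝ^M} exp(−κ f(z)) ρ(dz) ) = z*. -/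
open MeasureTheory Filter

/-- The topological support of a Borel measure: the set of points all of whose open
neighborhoods have positive measure (equivalently, the smallest closed set of full
measure). -/
def measureSupport {E : Type*} [TopologicalSpace E] [MeasurableSpace E]
    (ρ : Measure E) : Set E :=
  {x | ∀ U : Set E, IsOpen U → x ∈ U → 0 < ρ U}

/-! The Gibbs weights `exp (-κ f)` concentrate at `z*`. Outside any ball around `z*`, `f` exceeds
`f z*` by some `δ > 0` on the compact support, while the open set `{f < f z* + δ / 2}` contains
`z*` and so has positive mass; hence the weight outside the ball is at most a constant times
`exp (-κ δ / 2)` times the total weight. As the support is bounded, the reweighted mean then lies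
within `ε + O(exp (-κ δ / 2))` of `z*`. -/

open Topology Metric Set Real

theorem measureSupport_eq_support {X : Type*} [TopologicalSpace X] [MeasurableSpace X]
    (ρ : Measure X) : measureSupport ρ = ρ.support := by
  ext x
  simp only [measureSupport, Measure.support_eq_forall_isOpen, mem_ofPred_eq]
  exact forall_congr' fun _ => imp.swap

theorem IsCompact.exists_pos_add_le_of_unique_min {X : Type*} [TopologicalSpace X]
    {S U : Set X} (hS : IsCompact S) (hU : IsOpen U) {f : X → ℝ} (hf : ContinuousOn f S)
    {x₀ : X} (hx₀U : x₀ ∈ U) (hmin : ∀ x ∈ S, x ≠ x₀ → f x₀ < f x) :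
    ∃ δ > 0, ∀ x ∈ S \ U, f x₀ + δ ≤ f x := by
  rcases (S \ U).eq_empty_or_nonempty with hempty | hne
  · exact ⟨1, one_pos, by simp [hempty]⟩
  obtain ⟨x₁, ⟨hx₁S, hx₁U⟩, hx₁min⟩ :=
    (hS.diff hU).exists_isMinOn hne (hf.mono sdiff_subset)
  have hx₁ : x₁ ≠ x₀ := fun h => hx₁U (h ▸ hx₀U)
  exact ⟨f x₁ - f x₀, sub_pos.mpr (hmin x₁ hx₁S hx₁), fun x hx => by
    linarith [isMinOn_iff.mp hx₁min x hx]⟩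

theorem Continuous.integrable_of_ae_mem_isCompact {X E : Type*} [TopologicalSpace X] [T2Space X]
    [MeasurableSpace X] [OpensMeasurableSpace X] [NormedAddCommGroup E] {ρ : Measure X}
    [IsFiniteMeasure ρ] {g : X → E} (hg : Continuous g) {S : Set X} (hS : IsCompact S)
    (hρS : ∀ᵐ x ∂ρ, x ∈ S) : Integrable g ρ := by
  simpa only [IntegrableOn, Measure.restrict_eq_self_of_ae_mem hρS] using
    hg.continuousOn.integrableOn_compact (μ := ρ) hS

section GibbsWeights

variable {X : Type*} [MeasurableSpace X] {ρ : Measure X} [IsFiniteMeasure ρ] {f : X → ℝ}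
  {κ m : ℝ}

theorem setIntegral_exp_neg_mul_le (hκ : 0 ≤ κ) {s : Set X} (hm : ∀ᵐ x ∂ρ, x ∈ s → m ≤ f x) :
    ∫ x in s, exp (-κ * f x) ∂ρ ≤ exp (-κ * m) * ρ.real s := by
  refine (le_norm_self _).trans (norm_setIntegral_le_of_norm_le_const_ae' (measure_lt_top _ _) ?_)
  filter_upwards [hm] with x hx hxs
  rw [norm_of_nonneg (exp_pos _).le, exp_le_exp]
  nlinarith [hx hxs]

theorem exp_neg_mul_mul_measureReal_le_integral (hκ : 0 ≤ κ) {s : Set X} (hs : MeasurableSet s)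
    (hm : ∀ x ∈ s, f x ≤ m) (hint : Integrable (fun x => exp (-κ * f x)) ρ) :
    exp (-κ * m) * ρ.real s ≤ ∫ x, exp (-κ * f x) ∂ρ := by
  refine (setIntegral_ge_of_const_le_real hs (measure_ne_top _ _) (fun x hx => ?_)
    hint.integrableOn).trans (setIntegral_le_integral hint (ae_of_all _ fun x => (exp_pos _).le))
  rw [exp_le_exp]
  nlinarith [hm x hx]

variable [TopologicalSpace X] [T2Space X] [OpensMeasurableSpace X]

theorem tendsto_setIntegral_compl_exp_div_integral_exp {S : Set X} (hS : IsCompact S)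
    (hρS : ∀ᵐ x ∂ρ, x ∈ S) (hf : Continuous f) {x₀ : X} (hx₀ : x₀ ∈ ρ.support)
    (hmin : ∀ x ∈ S, x ≠ x₀ → f x₀ < f x) {U : Set X} (hU : IsOpen U) (hx₀U : x₀ ∈ U) :
    Tendsto (fun κ : ℝ => (∫ x in Uᶜ, exp (-κ * f x) ∂ρ) / ∫ x, exp (-κ * f x) ∂ρ)
      atTop (𝓝 0) := by
  obtain ⟨δ, hδ, hgap⟩ := hS.exists_pos_add_le_of_unique_min hU hf.continuousOn hx₀U hmin
  set V := {x | f x < f x₀ + δ / 2}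
  have hV : IsOpen V := isOpen_lt hf continuous_const
  have hρV : 0 < ρ.real V := by
    refine ENNReal.toReal_pos ?_ (measure_ne_top _ _)
    refine ((Measure.mem_support_iff_forall _).mp hx₀ V (hV.mem_nhds ?_)).ne'
    change f x₀ < f x₀ + δ / 2
    linarith
  have hint : ∀ κ : ℝ, Integrable (fun x => exp (-κ * f x)) ρ := fun κ =>
    (by fun_prop : Continuous _).integrable_of_ae_mem_isCompact hS hρS
  have hgapU : ∀ᵐ x ∂ρ, x ∈ Uᶜ → f x₀ + δ ≤ f x := by
    filter_upwards [hρS] with x hxS hxU using hgap x ⟨hxS, hxU⟩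
  have hbound : ∀ κ : ℝ, 0 ≤ κ → (∫ x in Uᶜ, exp (-κ * f x) ∂ρ) / ∫ x, exp (-κ * f x) ∂ρ ≤
      ρ.real univ / ρ.real V * exp (-(δ / 2 * κ)) := by
    intro κ hκ
    have hsplit : exp (-κ * (f x₀ + δ)) = exp (-(δ / 2 * κ)) * exp (-κ * (f x₀ + δ / 2)) := by
      rw [← exp_add]; ring_nf
    refine div_le_of_le_mul₀ (integral_nonneg fun x => (exp_pos _).le) (by positivity) ?_
    calc ∫ x in Uᶜ, exp (-κ * f x) ∂ρ
        ≤ exp (-κ * (f x₀ + δ)) * ρ.real Uᶜ := setIntegral_exp_neg_mul_le hκ hgapU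
      _ ≤ exp (-κ * (f x₀ + δ)) * ρ.real univ := by
          gcongr
          exacts [measure_ne_top _ _, subset_univ _]
      _ = ρ.real univ / ρ.real V * exp (-(δ / 2 * κ)) *
            (exp (-κ * (f x₀ + δ / 2)) * ρ.real V) := by
          rw [hsplit]; field_simp
      _ ≤ _ := by
          gcongr
          exact exp_neg_mul_mul_measureReal_le_integral hκ hV.measurableSet
            (fun x hx => hx.out.le) (hint κ)
  have hlim : Tendsto (fun κ : ℝ => ρ.real univ / ρ.real V * exp (-(δ / 2 * κ))) atTop (𝓝 0) := by
    simpa only [mul_zero, Function.comp_def, id] using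
      (tendsto_exp_neg_atTop_nhds_zero.comp (tendsto_id.const_mul_atTop (half_pos hδ))).const_mul
        (ρ.real univ / ρ.real V)
  refine tendsto_of_tendsto_of_tendsto_of_le_of_le' tendsto_const_nhds hlim
    (Eventually.of_forall fun κ => div_nonneg (integral_nonneg fun x => (exp_pos _).le)
      (integral_nonneg fun x => (exp_pos _).le)) ((eventually_ge_atTop 0).mono hbound)

end GibbsWeights

section WeightedMean

variable {E : Type*} [NormedAddCommGroup E] [NormedSpace ℝ E] [MeasurableSpace E]

noncomputable def weightedMean (ρ : Measure E) (w : E → ℝ) : E :=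
  (∫ z, w z ∂ρ)⁻¹ • ∫ z, w z • z ∂ρ

variable [CompleteSpace E] [OpensMeasurableSpace E] {ρ : Measure E} {z₀ : E} {R : ℝ}

theorem norm_weightedMean_sub_le (hR : ∀ᵐ z ∂ρ, z ∈ closedBall z₀ R) {w : E → ℝ}
    (hw_nonneg : ∀ z, 0 ≤ w z) (hw : Integrable w ρ) (hwz : Integrable (fun z => w z • z) ρ)
    (hpos : 0 < ∫ z, w z ∂ρ) {ε : ℝ} (hε : 0 ≤ ε) :
    ‖weightedMean ρ w - z₀‖ ≤ ε + R * ((∫ z in (ball z₀ ε)ᶜ, w z ∂ρ) / ∫ z, w z ∂ρ) := by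
  set D := ∫ z, w z ∂ρ
  have hfar : MeasurableSet (ball z₀ ε)ᶜ := measurableSet_ball.compl
  have hwz₀ : Integrable (fun z => w z • (z - z₀)) ρ :=
    (hwz.sub (hw.smul_const z₀)).congr (ae_of_all _ fun z => (smul_sub (w z) z z₀).symm)
  have hmean : weightedMean ρ w - z₀ = D⁻¹ • ∫ z, w z • (z - z₀) ∂ρ := by
    simp_rw [smul_sub]
    rw [integral_sub hwz (hw.smul_const z₀), integral_smul_const, smul_sub, smul_smul,
      inv_mul_cancel₀ hpos.ne', one_smul]
    rfl
  have hpointwise : ∀ᵐ z ∂ρ, ‖w z • (z - z₀)‖ ≤ ε * w z + R * (ball z₀ ε)ᶜ.indicator w z := by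
    filter_upwards [hR] with z hz
    rw [norm_smul, norm_of_nonneg (hw_nonneg z), ← dist_eq_norm]
    by_cases hzε : z ∈ ball z₀ ε
    · rw [indicator_of_notMem (not_not_intro hzε), mul_zero, add_zero, mul_comm]
      exact mul_le_mul_of_nonneg_right (mem_ball.mp hzε).le (hw_nonneg z)
    · rw [indicator_of_mem hzε]
      nlinarith [hw_nonneg z, mem_closedBall.mp hz]
  have hintegral : ‖∫ z, w z • (z - z₀) ∂ρ‖ ≤ ε * D + R * ∫ z in (ball z₀ ε)ᶜ, w z ∂ρ :=
    calc ‖∫ z, w z • (z - z₀) ∂ρ‖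
        ≤ ∫ z, ‖w z • (z - z₀)‖ ∂ρ := norm_integral_le_integral_norm _
      _ ≤ ∫ z, (ε * w z + R * (ball z₀ ε)ᶜ.indicator w z) ∂ρ :=
          integral_mono_ae hwz₀.norm ((hw.const_mul ε).add ((hw.indicator hfar).const_mul R))
            hpointwise
      _ = ε * D + R * ∫ z in (ball z₀ ε)ᶜ, w z ∂ρ := by
          rw [integral_add (hw.const_mul ε) ((hw.indicator hfar).const_mul R),
            integral_const_mul, integral_const_mul, integral_indicator hfar]
  calc ‖weightedMean ρ w - z₀‖
      = D⁻¹ * ‖∫ z, w z • (z - z₀) ∂ρ‖ := by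
        rw [hmean, norm_smul, norm_inv, norm_of_nonneg hpos.le]
    _ ≤ D⁻¹ * (ε * D + R * ∫ z in (ball z₀ ε)ᶜ, w z ∂ρ) := by gcongr
    _ = ε + R * ((∫ z in (ball z₀ ε)ᶜ, w z ∂ρ) / D) := by field_simp

theorem tendsto_weightedMean {ι : Type*} {l : Filter ι} (hR : ∀ᵐ z ∂ρ, z ∈ closedBall z₀ R)
    {w : ι → E → ℝ} (hw_nonneg : ∀ i z, 0 ≤ w i z) (hw : ∀ i, Integrable (w i) ρ)
    (hwz : ∀ i, Integrable (fun z => w i z • z) ρ) (hpos : ∀ i, 0 < ∫ z, w i z ∂ρ)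
    (hconc : ∀ ε > 0,
      Tendsto (fun i => (∫ z in (ball z₀ ε)ᶜ, w i z ∂ρ) / ∫ z, w i z ∂ρ) l (𝓝 0)) :
    Tendsto (fun i => weightedMean ρ (w i)) l (𝓝 z₀) := by
  refine Metric.tendsto_nhds.mpr fun ε hε => ?_
  have hsmall := ((hconc (ε / 2) (half_pos hε)).const_mul R).eventually
    (gt_mem_nhds (by rw [mul_zero]; exact half_pos hε))
  filter_upwards [hsmall] with i hi
  rw [dist_eq_norm]
  linarith [norm_weightedMean_sub_le hR (hw_nonneg i) (hw i) (hwz i) (hpos i) (half_pos hε).le]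

end WeightedMean

/-- as `κ → ∞`, the `exp(-κ f)`-reweighted mean of a compactly supported
probability measure `ρ` converges to the unique minimizer `z*` of `f` on `supp ρ`. -/
theorem stmt_4 {M : ℕ}
    (ρ : Measure (EuclideanSpace ℝ (Fin M))) [IsProbabilityMeasure ρ]
    (hρsupp : IsCompact (measureSupport ρ))
    (f : EuclideanSpace ℝ (Fin M) → ℝ) (hf : Continuous f)
    (zstar : EuclideanSpace ℝ (Fin M)) (hz : zstar ∈ measureSupport ρ)
    (hmin : ∀ z ∈ measureSupport ρ, z ≠ zstar → f zstar < f z) :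
    Tendsto (fun κ : ℝ =>
        (∫ z, Real.exp (-κ * f z) ∂ρ)⁻¹ • (∫ z, Real.exp (-κ * f z) • z ∂ρ))
      atTop (nhds zstar) := by
  rw [measureSupport_eq_support] at hρsupp hz hmin
  have hsupp : ∀ᵐ z ∂ρ, z ∈ ρ.support := Measure.support_mem_ae
  obtain ⟨R, hR⟩ := hρsupp.isBounded.subset_closedBall zstar
  have hint : ∀ κ : ℝ, Integrable (fun z => exp (-κ * f z)) ρ := fun κ =>
    (by fun_prop : Continuous _).integrable_of_ae_mem_isCompact hρsupp hsupp
  exact tendsto_weightedMean (hsupp.mono hR) (fun κ z => (exp_pos _).le) hint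
    (fun κ => (by fun_prop : Continuous _).integrable_of_ae_mem_isCompact hρsupp hsupp)
    (fun κ => integral_exp_pos (hint κ))
    (fun ε hε => tendsto_setIntegral_compl_exp_div_integral_exp hρsupp hsupp hf hz hmin
      isOpen_ball (mem_ball_self hε))
end

section
/- Let Σ ∈ ℝ^{M×M} be symmetric positive definite, let μ ∈ ℝ^M, let κ_l, κ_h > 0, and set κ_t = κ_l + κ_h. Then the pair (m, V) = (μ, Σ) is the unique pair, with V ranging over symmetric positive definite matrices and m over ℝ^M, satisfying the fixed-point equations V = κ_t (κ_h V⁻¹ + κ_l Σ⁻¹)⁻¹ and m = (κ_h V⁻¹ + κ_l Σ⁻¹)⁻¹ (κ_l Σ⁻¹ μ + κ_h V⁻¹ m). Consequently, the self-consistent stationary Gaussian distribution of the consensus-based sampling dynamics has mean μ and covariance κ_h⁻¹ Σ, i.e., its density is proportional to exp(−κ_h L(z)) for the quadratic loss L(z) = ½ (z−μ)ᵀ Σ⁻¹ (z−μ). -/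
/-!
Multiplying the covariance equation by the mixed precision `κ_h V⁻¹ + κ_l Σ⁻¹` turns it into
`κ_h V⁻¹ + κ_l Σ⁻¹ = κ_t V⁻¹`, i.e. `κ_l Σ⁻¹ = κ_l V⁻¹`, so `V = Σ`. At `V = Σ` the mixed
precision is `κ_t Σ⁻¹`, and multiplying the mean equation by it leaves `κ_l Σ⁻¹ m = κ_l Σ⁻¹ μ`.
The stationary Gaussian has precision `(κ_h⁻¹ Σ)⁻¹ = κ_h Σ⁻¹`, so its exponent is `-κ_h L`.
-/

open Matrix

namespace Matrix

variable {n K : Type*} [Fintype n] [DecidableEq n] [Field K]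

theorem eq_smul_nonsing_inv_iff_mul_eq {A V : Matrix n n K} (hA : IsUnit A.det) (c : K) :
    V = c • A⁻¹ ↔ A * V = c • 1 := by
  constructor
  · rintro rfl
    rw [Matrix.mul_smul, mul_nonsing_inv _ hA]
  · intro h
    rw [← nonsing_inv_mul_cancel_left (A := A) V hA, h, Matrix.mul_smul, Matrix.mul_one]

theorem eq_smul_nonsing_inv_iff_mul_eq' {X V : Matrix n n K} (hV : IsUnit V.det) (c : K) :
    X = c • V⁻¹ ↔ X * V = c • 1 := by
  constructor
  · rintro rfl
    rw [Matrix.smul_mul, nonsing_inv_mul _ hV]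
  · intro h
    rw [← mul_nonsing_inv_cancel_right (A := V) X hV, h, Matrix.smul_mul, Matrix.one_mul]

theorem eq_nonsing_inv_mulVec_iff {A : Matrix n n K} (hA : IsUnit A.det) (m w : n → K) :
    m = A⁻¹ *ᵥ w ↔ A *ᵥ m = w := by
  constructor
  · rintro rfl
    rw [mulVec_mulVec, mul_nonsing_inv _ hA, one_mulVec]
  · rintro rfl
    rw [mulVec_mulVec, nonsing_inv_mul _ hA, one_mulVec]

theorem inv_inv_smul {S : Matrix n n K} (hS : IsUnit S.det) {κ : K} (hκ : κ ≠ 0) :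
    (κ⁻¹ • S)⁻¹ = κ • S⁻¹ :=
  inv_eq_left_inv <| by rw [Matrix.smul_mul, Matrix.mul_smul, nonsing_inv_mul _ hS, smul_smul,
    mul_inv_cancel₀ hκ, one_smul]

end Matrix

namespace ConsensusSampling

variable {n K : Type*} [Fintype n] [DecidableEq n] [Field K]

theorem covariance_fixedPoint_iff {V S : Matrix n n K} (hV : IsUnit V.det)
    {a b : K} (ha : a ≠ 0) (hprec : IsUnit (b • V⁻¹ + a • S⁻¹).det) :
    V = (a + b) • (b • V⁻¹ + a • S⁻¹)⁻¹ ↔ V = S := by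
  rw [eq_smul_nonsing_inv_iff_mul_eq hprec, ← eq_smul_nonsing_inv_iff_mul_eq' hV, add_smul,
    add_comm (a • V⁻¹), add_right_inj, smul_right_inj ha, eq_comm]
  exact ⟨fun h => inv_inj h hV, fun h => h ▸ rfl⟩

theorem mean_fixedPoint_iff {S : Matrix n n K} (hS : IsUnit S.det) {a b : K} (ha : a ≠ 0)
    (hab : a + b ≠ 0) (μ m : n → K) :
    m = (b • S⁻¹ + a • S⁻¹)⁻¹ *ᵥ (a • (S⁻¹ *ᵥ μ) + b • (S⁻¹ *ᵥ m)) ↔ m = μ := by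
  have hS' : IsUnit S⁻¹.det := isUnit_nonsing_inv_det_iff.2 hS
  have hprec : IsUnit (b • S⁻¹ + a • S⁻¹).det := by
    rw [← add_smul, det_smul, isUnit_iff_ne_zero]
    exact mul_ne_zero (pow_ne_zero _ (by rwa [add_comm])) hS'.ne_zero
  rw [eq_nonsing_inv_mulVec_iff hprec, add_mulVec, smul_mulVec, smul_mulVec, add_comm,
    add_left_inj, smul_right_inj ha,
    (mulVec_injective_iff_isUnit.2 ((isUnit_iff_isUnit_det _).2 hS')).eq_iff]

end ConsensusSampling

/-- `(m, V) = (μ, Σ)` is the unique fixed point (with `V` symmetric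
positive definite) of the consensus-based sampling moment equations with
`κ_t = κ_l + κ_h`; consequently the self-consistent stationary Gaussian has mean `μ`
and covariance `κ_h⁻¹ Σ`, i.e., density proportional to `exp(-κ_h L(z))` for
`L(z) = ½ (z-μ)ᵀ Σ⁻¹ (z-μ)`. -/
theorem stmt_9 {M : ℕ}
    (S : Matrix (Fin M) (Fin M) ℝ) (hS : S.PosDef) (μ : Fin M → ℝ)
    (κl κh κt : ℝ) (hκl : 0 < κl) (hκh : 0 < κh) (hκt : κt = κl + κh) :
    (∀ (m : Fin M → ℝ) (V : Matrix (Fin M) (Fin M) ℝ), V.PosDef →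
      ((V = κt • (κh • V⁻¹ + κl • S⁻¹)⁻¹ ∧
        m = (κh • V⁻¹ + κl • S⁻¹)⁻¹ *ᵥ (κl • (S⁻¹ *ᵥ μ) + κh • (V⁻¹ *ᵥ m))) ↔
        (m = μ ∧ V = S))) ∧
    (∃ c : ℝ, 0 < c ∧ ∀ z : Fin M → ℝ,
      Real.exp (-(1 / 2) * ((z - μ) ⬝ᵥ ((κh⁻¹ • S)⁻¹ *ᵥ (z - μ)))) =
        c * Real.exp (-κh * (1 / 2 * ((z - μ) ⬝ᵥ (S⁻¹ *ᵥ (z - μ)))))) := by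
  subst hκt
  have hSu : IsUnit S.det := hS.det_pos.ne'.isUnit
  refine ⟨fun m V hV => ?_, 1, one_pos, fun z => ?_⟩
  · have hprec : (κh • V⁻¹ + κl • S⁻¹).PosDef := (hV.inv.smul hκh).add (hS.inv.smul hκl)
    rw [ConsensusSampling.covariance_fixedPoint_iff hV.det_pos.ne'.isUnit hκl.ne'
      hprec.det_pos.ne'.isUnit, and_comm (b := V = S)]
    refine and_congr_right fun hVS => ?_
    subst hVS
    exact ConsensusSampling.mean_fixedPoint_iff hSu hκl.ne' (by positivity) μ m
  · rw [inv_inv_smul hSu hκh.ne', smul_mulVec, dotProduct_smul, smul_eq_mul, one_mul]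
    congr 1
    ring
end

section
/- Let Σ ∈ ℝ^{M×M} be symmetric positive definite with smallest eigenvalue e(Σ) and largest eigenvalue λ_max(Σ), let V_0 ∈ ℝ^{M×M}, let κ_l, κ_h, γ, δt > 0, set κ_t = κ_l + κ_h and c = 2 δt κ_l / (γ κ_t), and assume 0 < c < e(Σ). Define the sequence of matrices (V_t)_{t∈ℕ} by the recurrence V_{t+1} = V_t − c (Σ⁻¹ V_t − κ_h⁻¹ I). Then for all t ∈ ℕ: (i) Σ⁻¹ V_t − κ_h⁻¹ I = (I − c Σ⁻¹)^t (Σ⁻¹ V_0 − κ_h⁻¹ I); and (ii) ‖V_t − κ_h⁻¹ Σ‖ ≤ λ_max(Σ) (1 − c/λ_max(Σ))^t ‖Σ⁻¹ V_0 − κ_h⁻¹ I‖, where 0 ≤ 1 − c/λ_max(Σ) < 1 and ‖·‖ denotes the operator norm on ℝ^{M×M}. In particular V_t converges to κ_h⁻¹ Σ exponentially fast. -/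
/-!
Writing `Eₜ = Σ⁻¹ Vₜ - κₕ⁻¹ I`, the recurrence reads `Eₜ₊₁ = (I - c Σ⁻¹) Eₜ`, which gives (i).
Since `Vₜ - κₕ⁻¹ Σ = Σ Eₜ = Σ (I - c Σ⁻¹)ᵗ E₀`, and `Σ (I - c Σ⁻¹)ᵗ` is the function
`x ↦ x (1 - c/x)ᵗ` of the symmetric matrix `Σ`, its operator norm is the largest value of
`|x (1 - c/x)ᵗ|` over the eigenvalues `x ∈ [e(Σ), λ_max(Σ)]`. For `0 < c ≤ x` this expression is
increasing in `x`, so it is at most `λ_max (1 - c/λ_max)ᵗ`.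
-/

open Matrix
open scoped Matrix.Norms.L2Operator

theorem mul_sub_smul_one_eq_pow_mul {𝕜 R : Type*} [CommRing 𝕜] [Ring R] [Algebra 𝕜 R]
    (A : R) (c k : 𝕜) (V : ℕ → R) (hV : ∀ t, V (t + 1) = V t - c • (A * V t - k • 1))
    (t : ℕ) : A * V t - k • 1 = (1 - c • A) ^ t * (A * V 0 - k • 1) := by
  induction t with
  | zero => rw [pow_zero, one_mul]
  | succ t ih =>
    rw [pow_succ', mul_assoc, ← ih, hV t, mul_sub, mul_smul_comm, sub_mul, one_mul,
      smul_mul_assoc]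
    abel

theorem abs_mul_one_sub_div_pow_le {c x L : ℝ} (hc : 0 < c) (hcx : c ≤ x) (hxL : x ≤ L)
    (t : ℕ) : |x * (1 - c / x) ^ t| ≤ L * (1 - c / L) ^ t := by
  have hx : 0 < x := hc.trans_le hcx
  have hfac : 0 ≤ 1 - c / x := sub_nonneg.2 ((div_le_one hx).2 hcx)
  have hmono : 1 - c / x ≤ 1 - c / L := sub_le_sub_left (div_le_div_of_nonneg_left hc.le hx hxL) 1
  rw [abs_of_nonneg (by positivity)]
  exact mul_le_mul hxL (pow_le_pow_left₀ hfac hmono t) (by positivity) (hx.le.trans hxL)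

namespace Matrix.IsHermitian

variable {𝕜 n : Type*} [RCLike 𝕜] [Fintype n] [DecidableEq n] {A : Matrix n n 𝕜}

theorem l2_opNorm_cfc (hA : A.IsHermitian) (f : ℝ → ℝ) :
    ‖cfc f A‖ = ‖f ∘ hA.eigenvalues‖ := by
  rw [hA.cfc_eq, IsHermitian.cfc, Unitary.conjStarAlgAut_apply, ← Unitary.coe_star,
    CStarRing.norm_mul_coe_unitary, CStarRing.norm_coe_unitary_mul, l2_opNorm_diagonal]
  simp [Pi.norm_def, Function.comp_def]

theorem cfc_inv_eq_nonsing_inv (hA : A.IsHermitian) (hA' : IsUnit A) :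
    cfc (·⁻¹ : ℝ → ℝ) A = A⁻¹ := by
  rw [nonsing_inv_eq_ringInverse, cfc_ringInverse_id A hA' hA.isSelfAdjoint]

theorem cfc_mul_one_sub_div_pow (hA : A.IsHermitian) (hA' : IsUnit A) (c : ℝ) (t : ℕ) :
    cfc (fun x => x * (1 - c / x) ^ t) A = A * (1 - c • A⁻¹) ^ t := by
  have hcont (f : ℝ → ℝ) : ContinuousOn f (spectrum ℝ A) := finite_real_spectrum.continuousOn f
  simp_rw [div_eq_mul_inv]
  rw [cfc_mul _ _ A (hcont _) (hcont _),
    cfc_pow (fun x => 1 - c * x⁻¹) t A (hcont _) hA.isSelfAdjoint,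
    cfc_sub _ _ A (hcont _) (hcont _), cfc_const_one ℝ A hA.isSelfAdjoint,
    cfc_const_mul _ _ A (hcont _), cfc_inv_eq_nonsing_inv hA hA', cfc_id' ℝ A hA.isSelfAdjoint]

end Matrix.IsHermitian

theorem stmt_12_general {M : ℕ}
    (S : Matrix (Fin M) (Fin M) ℝ) (hS : S.PosDef)
    (V0 : Matrix (Fin M) (Fin M) ℝ)
    (κh : ℝ)
    (c : ℝ)
    (e lmax : ℝ) (he : e = ⨅ i, hS.1.eigenvalues i)
    (hlmax : lmax = ⨆ i, hS.1.eigenvalues i)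
    (hc0 : 0 < c) (hce : c < e)
    (V : ℕ → Matrix (Fin M) (Fin M) ℝ) (hV0 : V 0 = V0)
    (hrec : ∀ t : ℕ, V (t + 1) = V t - c • (S⁻¹ * V t - κh⁻¹ • (1 : Matrix (Fin M) (Fin M) ℝ))) :
    ∀ t : ℕ,
      S⁻¹ * V t - κh⁻¹ • (1 : Matrix (Fin M) (Fin M) ℝ) =
        (1 - c • S⁻¹) ^ t * (S⁻¹ * V0 - κh⁻¹ • (1 : Matrix (Fin M) (Fin M) ℝ)) ∧
      ‖Matrix.toEuclideanCLM (𝕜 := ℝ) (V t - κh⁻¹ • S)‖ ≤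
        lmax * (1 - c / lmax) ^ t *
          ‖Matrix.toEuclideanCLM (𝕜 := ℝ) (S⁻¹ * V0 - κh⁻¹ • (1 : Matrix (Fin M) (Fin M) ℝ))‖ ∧
      0 ≤ 1 - c / lmax ∧ 1 - c / lmax < 1 := by
  have hc_le (i : Fin M) : c ≤ hS.1.eigenvalues i :=
    hce.le.trans (he ▸ ciInf_le (Set.finite_range _).bddBelow i)
  have hle_lmax (i : Fin M) : hS.1.eigenvalues i ≤ lmax :=
    hlmax ▸ le_ciSup (Set.finite_range _).bddAbove i
  obtain ⟨i₀⟩ : Nonempty (Fin M) := by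
    by_contra hempty
    rw [not_nonempty_iff] at hempty
    rw [he, Real.iInf_of_isEmpty] at hce
    exact hc0.not_gt hce
  have hc_lmax : c ≤ lmax := (hc_le i₀).trans (hle_lmax i₀)
  have hlmax_pos : 0 < lmax := hc0.trans_le hc_lmax
  have hrate_nonneg : 0 ≤ 1 - c / lmax := sub_nonneg.2 ((div_le_one hlmax_pos).2 hc_lmax)
  have hE := mul_sub_smul_one_eq_pow_mul S⁻¹ c κh⁻¹ V hrec
  intro t
  refine ⟨hV0 ▸ hE t, ?_, hrate_nonneg, sub_lt_self 1 (div_pos hc0 hlmax_pos)⟩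
  have hdev : V t - κh⁻¹ • S = S * (1 - c • S⁻¹) ^ t * (S⁻¹ * V0 - κh⁻¹ • 1) := by
    rw [mul_assoc, ← hV0, ← hE t, mul_sub,
      mul_nonsing_inv_cancel_left _ _ ((isUnit_iff_isUnit_det S).1 hS.isUnit), mul_smul_comm,
      mul_one]
  simp only [l2_opNorm_toEuclideanCLM]
  rw [hdev, ← hS.1.cfc_mul_one_sub_div_pow hS.isUnit]
  refine (norm_mul_le _ _).trans (mul_le_mul_of_nonneg_right ?_ (norm_nonneg _))
  rw [hS.1.l2_opNorm_cfc, pi_norm_le_iff_of_nonneg (by positivity)]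
  exact fun i => abs_mul_one_sub_div_pow_le hc0 (hc_le i) (hle_lmax i) t

/-- exponential convergence of the second moment of the time-discretized
consensus-based sampling dynamics with quadratic loss. Here `e = ⨅ i, eigenvalues i`
and `lmax = ⨆ i, eigenvalues i` are the smallest and largest eigenvalues of `Σ`,
and `‖·‖` is the operator norm on matrices, expressed via the norm of the associated
continuous linear map on Euclidean space (`Matrix.toEuclideanCLM`). -/
theorem stmt_12 {M : ℕ}
    (S : Matrix (Fin M) (Fin M) ℝ) (hS : S.PosDef)
    (V0 : Matrix (Fin M) (Fin M) ℝ)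
    (κl κh γ δt : ℝ) (hκl : 0 < κl) (hκh : 0 < κh) (hγ : 0 < γ) (hδt : 0 < δt)
    (κt c : ℝ) (hκt : κt = κl + κh) (hcdef : c = 2 * δt * κl / (γ * κt))
    (e lmax : ℝ) (he : e = ⨅ i, hS.1.eigenvalues i)
    (hlmax : lmax = ⨆ i, hS.1.eigenvalues i)
    (hc0 : 0 < c) (hce : c < e)
    (V : ℕ → Matrix (Fin M) (Fin M) ℝ) (hV0 : V 0 = V0)
    (hrec : ∀ t : ℕ, V (t + 1) = V t - c • (S⁻¹ * V t - κh⁻¹ • (1 : Matrix (Fin M) (Fin M) ℝ))) :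
    ∀ t : ℕ,
      S⁻¹ * V t - κh⁻¹ • (1 : Matrix (Fin M) (Fin M) ℝ) =
        (1 - c • S⁻¹) ^ t * (S⁻¹ * V0 - κh⁻¹ • (1 : Matrix (Fin M) (Fin M) ℝ)) ∧
      ‖Matrix.toEuclideanCLM (𝕜 := ℝ) (V t - κh⁻¹ • S)‖ ≤
        lmax * (1 - c / lmax) ^ t *
          ‖Matrix.toEuclideanCLM (𝕜 := ℝ) (S⁻¹ * V0 - κh⁻¹ • (1 : Matrix (Fin M) (Fin M) ℝ))‖ ∧
      0 ≤ 1 - c / lmax ∧ 1 - c / lmax < 1 :=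
  stmt_12_general S hS V0 κh c e lmax he hlmax hc0 hce V hV0 hrec
end
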